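/- Consider the three-action, three-state persuasion instance parametrized by δ ∈ (0, 1/4): states are θ_1, θ_2, θ_3; the receiver's payoff is r_i(θ_j) = 1 if i = j and 0 otherwise; the sender's payoff is s_3(θ) = 1 and s_1(θ) = s_2(θ) = 0 in every state. Let λ assign probabilities (1−2δ, 2δ, 0) and λ' assign probabilities (1−2δ, δ, δ) to (θ_1, θ_2, θ_3). Then: (i) the maximum expected sender utility over incentive-compatible direct schemes for λ' equals 3δ; (ii) for any c ∈ [0, 1/4), every c-incentive-compatible direct scheme φ' for λ' with expected sender utility at least 3δ satisfies φ'(θ_2, σ_3) ≥ 1 − 4c; and (iii) for any c ∈ [0, 1/2), every c-incentive-compatible direct scheme φ for λ satisfies φ(θ_1, σ_3) = 0 and φ(θ_2, σ_3) = 0. -/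

import Mathlib

/-!
Everything hinges on the mass `M = ∑ θ, μ θ * φ θ 2` of the sender's favourite signal `σ_3`.
For `λ'`, the obedience constraints of `σ_3` against actions 1 and 2 give
`(1 - c) M ≤ 2δ φ(θ_3, σ_3) + δ φ(θ_2, σ_3) ≤ 3δ`, which is attained (for `c = 0`) by
pooling all of `θ_2, θ_3` and a `δ / (1 - 2δ)` share of `θ_1` into `σ_3`; and if `M ≥ 3δ`
the constraint against action 1 forces `δ (1 - φ(θ_2, σ_3)) ≤ c M ≤ 3cδ / (1 - c)`.
For `λ`, state `θ_3` has no mass, so the two constraints add up to `(1 - 2c) M ≤ 0`.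
-/

open Finset

namespace ThreeActions

-- states: `Fin 3` (θ_1, θ_2, θ_3); actions: `Fin 3` (actions 1, 2, 3, where
-- action `2` — the third action — is the sender's favorite)

def rcv (θ i : Fin 3) : ℝ := if i = θ then 1 else 0

def snd (_θ i : Fin 3) : ℝ := if i = 2 then 1 else 0

/-- the distribution `λ = (1 − 2δ, 2δ, 0)` -/
noncomputable def lam (δ : ℝ) : Fin 3 → ℝ := ![1 - 2 * δ, 2 * δ, 0]

/-- the distribution `λ' = (1 − 2δ, δ, δ)` -/
noncomputable def lam' (δ : ℝ) : Fin 3 → ℝ := ![1 - 2 * δ, δ, δ]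

/-- a direct signaling scheme: signal `i` recommends action `i` -/
def IsScheme (φ : Fin 3 → Fin 3 → ℝ) : Prop :=
  (∀ θ i, 0 ≤ φ θ i) ∧ ∀ θ, ∑ i, φ θ i = 1

def CIC (c : ℝ) (μ : Fin 3 → ℝ) (φ : Fin 3 → Fin 3 → ℝ) : Prop :=
  ∀ i j : Fin 3, ∑ θ, μ θ * φ θ i * (rcv θ j - c) ≤ ∑ θ, μ θ * φ θ i * rcv θ i

def senderUtil (μ : Fin 3 → ℝ) (φ : Fin 3 → Fin 3 → ℝ) : ℝ :=
  ∑ θ, ∑ i, μ θ * φ θ i * snd θ i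

variable {c δ : ℝ} {μ : Fin 3 → ℝ} {φ : Fin 3 → Fin 3 → ℝ}

theorem IsScheme.le_one (hφ : IsScheme φ) (θ i : Fin 3) : φ θ i ≤ 1 :=
  hφ.2 θ ▸ single_le_sum (fun j _ => hφ.1 θ j) (mem_univ i)

theorem CIC.le (h : CIC c μ φ) (i j : Fin 3) :
    μ j * φ j i - c * ∑ θ, μ θ * φ θ i ≤ μ i * φ i i := by
  have hij := h i j
  simp only [rcv, mul_sub, sum_sub_distrib, mul_ite, mul_one, mul_zero, sum_ite_eq,
    mem_univ, if_true, ← sum_mul] at hij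
  linarith

theorem senderUtil_eq_sum (μ : Fin 3 → ℝ) (φ : Fin 3 → Fin 3 → ℝ) :
    senderUtil μ φ = ∑ θ, μ θ * φ θ 2 := by
  simp [senderUtil, snd]

theorem one_sub_mul_senderUtil_le_of_cic_lam' (hδ : 0 ≤ δ) (hφ : IsScheme φ)
    (h : CIC c (lam' δ) φ) : (1 - c) * senderUtil (lam' δ) φ ≤ 3 * δ := by
  have h20 := h.le 2 0
  have h21 := h.le 2 1
  simp only [senderUtil_eq_sum, lam', Fin.sum_univ_three, Matrix.cons_val_zero,
    Matrix.cons_val_one, Matrix.cons_val_two, Matrix.head_cons, Matrix.tail_cons] at h20 h21 ⊢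
  nlinarith [hφ.le_one 1 2, hφ.le_one 2 2]

theorem mul_one_sub_le_mul_senderUtil_of_cic_lam' (hδ : 0 ≤ δ) (hφ : IsScheme φ)
    (h : CIC c (lam' δ) φ) (hu : 3 * δ ≤ senderUtil (lam' δ) φ) :
    δ * (1 - φ 1 2) ≤ c * senderUtil (lam' δ) φ := by
  have h20 := h.le 2 0
  simp only [senderUtil_eq_sum, lam', Fin.sum_univ_three, Matrix.cons_val_zero,
    Matrix.cons_val_one, Matrix.cons_val_two, Matrix.head_cons, Matrix.tail_cons] at h20 hu ⊢
  nlinarith [hφ.le_one 2 2]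

theorem one_sub_four_mul_le_of_cic_lam' (hδ : 0 < δ) (hc0 : 0 ≤ c) (hc : c ≤ 1 / 4)
    (hφ : IsScheme φ) (h : CIC c (lam' δ) φ) (hu : 3 * δ ≤ senderUtil (lam' δ) φ) :
    1 - 4 * c ≤ φ 1 2 := by
  have hM := one_sub_mul_senderUtil_le_of_cic_lam' hδ.le hφ h
  have hgap := mul_one_sub_le_mul_senderUtil_of_cic_lam' hδ.le hφ h hu
  -- `δ (1 - φ₁₂) (1 - c) ≤ c (1 - c) M ≤ 3cδ`, and `3c ≤ 4c (1 - c)` for `c ≤ 1/4`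
  have key : (1 - φ 1 2) * (1 - c) ≤ 3 * c := by
    refine le_of_mul_le_mul_left ?_ hδ
    nlinarith
  nlinarith

theorem signal_two_eq_zero_of_cic_lam (hδ0 : 0 < δ) (hδ1 : δ < 1 / 2) (hc : c < 1 / 2)
    (hφ : IsScheme φ) (h : CIC c (lam δ) φ) : φ 0 2 = 0 ∧ φ 1 2 = 0 := by
  have h20 := h.le 2 0
  have h21 := h.le 2 1
  simp only [lam, Fin.sum_univ_three, Matrix.cons_val_zero, Matrix.cons_val_one,
    Matrix.cons_val_two, Matrix.head_cons, Matrix.tail_cons, zero_mul, add_zero] at h20 h21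
  have hθ1 : 0 ≤ (1 - 2 * δ) * φ 0 2 := mul_nonneg (by linarith) (hφ.1 0 2)
  have hθ2 : 0 ≤ 2 * δ * φ 1 2 := mul_nonneg (by linarith) (hφ.1 1 2)
  have hmass : (1 - 2 * c) * ((1 - 2 * δ) * φ 0 2 + 2 * δ * φ 1 2) ≤ 0 := by linarith
  have hzero : (1 - 2 * δ) * φ 0 2 + 2 * δ * φ 1 2 = 0 :=
    le_antisymm (nonpos_of_mul_nonpos_right hmass (by linarith)) (add_nonneg hθ1 hθ2)
  obtain ⟨hθ1_zero, hθ2_zero⟩ := (add_eq_zero_iff_of_nonneg hθ1 hθ2).1 hzero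
  exact ⟨(mul_eq_zero.1 hθ1_zero).resolve_left (by linarith),
    (mul_eq_zero.1 hθ2_zero).resolve_left (by positivity)⟩

noncomputable def optimalScheme (δ : ℝ) : Fin 3 → Fin 3 → ℝ :=
  ![![1 - δ / (1 - 2 * δ), 0, δ / (1 - 2 * δ)], ![0, 0, 1], ![0, 0, 1]]

theorem optimalScheme_isScheme (hδ0 : 0 ≤ δ) (hδ1 : δ ≤ 1 / 3) :
    IsScheme (optimalScheme δ) := by
  have hshare : δ / (1 - 2 * δ) ≤ 1 := (div_le_one (by linarith)).2 (by linarith)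
  have : 0 ≤ δ / (1 - 2 * δ) := div_nonneg hδ0 (by linarith)
  refine ⟨fun θ i => ?_, fun θ => ?_⟩
  · fin_cases θ <;> fin_cases i <;> simp [optimalScheme] <;> linarith
  · fin_cases θ <;> simp [optimalScheme, Fin.sum_univ_three]

theorem cic_zero_optimalScheme (hδ : δ ≤ 1 / 3) : CIC 0 (lam' δ) (optimalScheme δ) := by
  have hδ' : 1 - 2 * δ ≠ 0 := by linarith
  intro i j
  fin_cases i <;> fin_cases j <;> simp [rcv, lam', optimalScheme] <;>
    field_simp <;> linarith

theorem senderUtil_optimalScheme (hδ : 1 - 2 * δ ≠ 0) :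
    senderUtil (lam' δ) (optimalScheme δ) = 3 * δ := by
  simp [senderUtil_eq_sum, lam', optimalScheme, Fin.sum_univ_three]
  field_simp
  ring

end ThreeActions

open ThreeActions

/-- in the three-action instance with parameter `δ ∈ (0, 1/4)`:
(i) the maximum expected sender utility over incentive-compatible direct schemes for
`λ'` equals `3δ`; (ii) for `c ∈ [0, 1/4)`, every `c`-incentive-compatible scheme for
`λ'` with expected sender utility at least `3δ` satisfies `φ'(θ_2, σ_3) ≥ 1 − 4c`; and
(iii) for `c ∈ [0, 1/2)`, every `c`-incentive-compatible scheme for `λ` satisfies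
`φ(θ_1, σ_3) = 0` and `φ(θ_2, σ_3) = 0`. -/
theorem three_action_instance (δ : ℝ) (hδ0 : 0 < δ) (hδ1 : δ < 1 / 4) :
    IsGreatest {u : ℝ | ∃ φ : Fin 3 → Fin 3 → ℝ,
        IsScheme φ ∧ CIC 0 (lam' δ) φ ∧ u = senderUtil (lam' δ) φ}
      (3 * δ) ∧
    (∀ c : ℝ, 0 ≤ c → c < 1 / 4 →
      ∀ φ' : Fin 3 → Fin 3 → ℝ, IsScheme φ' → CIC c (lam' δ) φ' →
        3 * δ ≤ senderUtil (lam' δ) φ' → 1 - 4 * c ≤ φ' 1 2) ∧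
    (∀ c : ℝ, 0 ≤ c → c < 1 / 2 →
      ∀ φ : Fin 3 → Fin 3 → ℝ, IsScheme φ → CIC c (lam δ) φ →
        φ 0 2 = 0 ∧ φ 1 2 = 0) := by
  refine ⟨⟨?_, ?_⟩, ?_, ?_⟩
  · exact ⟨optimalScheme δ, optimalScheme_isScheme hδ0.le (by linarith),
      cic_zero_optimalScheme (by linarith), (senderUtil_optimalScheme (by linarith)).symm⟩
  · rintro u ⟨φ, hφ, hIC, rfl⟩
    simpa using one_sub_mul_senderUtil_le_of_cic_lam' hδ0.le hφ hIC
  · intro c hc0 hc1 φ' hφ' hIC hu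
    exact one_sub_four_mul_le_of_cic_lam' hδ0 hc0 hc1.le hφ' hIC hu
  · intro c _ hc1 φ hφ hIC
    exact signal_two_eq_zero_of_cic_lam hδ0 (by linarith) hc1 hφ hIC
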